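/- arXiv:2412.16396 — 3 statements merged into one kernel-verified Lean document; each statement's English description precedes it below -/
import Mathlib

section
/- Power balance and dissipation for port-Hamiltonian LTV systems: if the LTV system is port-Hamiltonian with data Q, J, R, K, G, P, S, N and Hamiltonian H(t,x) = ½ x* Q(t) x, then every state-input-output solution (x,u,y) satisfies, for a.e. t ∈ 𝕋, the power balance equation d/dt H(t,x(t)) = −[Q(t)x(t); u(t)]* W(t) [Q(t)x(t); u(t)] + Re(y(t)* u(t)), where W(t) = [[R(t), P(t)],[P(t)*, S(t)]]; in particular the dissipation inequality d/dt H(t,x(t)) ≤ Re(y(t)* u(t)) holds for a.e. t ∈ 𝕋. -/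
open MeasureTheory Matrix Set
open scoped ENNReal ComplexOrder

noncomputable section

attribute [local instance] Matrix.normedAddCommGroup Matrix.normedSpace

variable {n m : ℕ}

/-- `f` is locally `Lᵖ` on the interval `T`: it is `ℒᵖ` on every compact subinterval. -/
def LocLp {E : Type*} [NormedAddCommGroup E] (T : Set ℝ) (p : ℝ≥0∞) (f : ℝ → E) : Prop :=
  ∀ a ∈ T, ∀ b ∈ T, MemLp f p (volume.restrict (Icc a b))

/-- The coefficient regularity assumptions of an LTV system:
`A ∈ L¹_loc`, `B ∈ L²_loc`, `C ∈ L²_loc`, `D ∈ L^∞_loc`. -/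
def IsLTV (T : Set ℝ) (A : ℝ → Matrix (Fin n) (Fin n) ℂ) (B : ℝ → Matrix (Fin n) (Fin m) ℂ)
    (C : ℝ → Matrix (Fin m) (Fin n) ℂ) (D : ℝ → Matrix (Fin m) (Fin m) ℂ) : Prop :=
  LocLp T 1 A ∧ LocLp T 2 B ∧ LocLp T 2 C ∧ LocLp T ⊤ D

/-- A state-input-output solution of the LTV system on `T` (Carathéodory sense):
`u, y ∈ L²_loc`, `x` is locally absolutely continuous with `ẋ = A x + B u` a.e.
(expressed in integral form), and `y = C x + D u` a.e. on `T`. -/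
def IsSolution (T : Set ℝ) (A : ℝ → Matrix (Fin n) (Fin n) ℂ) (B : ℝ → Matrix (Fin n) (Fin m) ℂ)
    (C : ℝ → Matrix (Fin m) (Fin n) ℂ) (D : ℝ → Matrix (Fin m) (Fin m) ℂ)
    (x : ℝ → Fin n → ℂ) (u y : ℝ → Fin m → ℂ) : Prop :=
  LocLp T 2 u ∧ LocLp T 2 y ∧
  (∀ a ∈ T, ∀ b ∈ T, IntegrableOn (fun r => A r *ᵥ x r + B r *ᵥ u r) (Icc a b)) ∧
  (∀ s ∈ T, ∀ t ∈ T, x t - x s = ∫ r in s..t, (A r *ᵥ x r + B r *ᵥ u r)) ∧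
  (∀ᵐ t ∂(volume : Measure ℝ), t ∈ T → y t = C t *ᵥ x t + D t *ᵥ u t)

/-- Port-Hamiltonian structure for the LTV system `(A,B,C,D)` with Hamiltonian data
`Q` (which is `W^{1,1}_loc` with a.e. derivative `Q'`) and coefficients
`J, R, K, G, P, S, N`. -/
def IsPH (T : Set ℝ) (A : ℝ → Matrix (Fin n) (Fin n) ℂ) (B : ℝ → Matrix (Fin n) (Fin m) ℂ)
    (C : ℝ → Matrix (Fin m) (Fin n) ℂ) (D : ℝ → Matrix (Fin m) (Fin m) ℂ)
    (Q Q' J R K : ℝ → Matrix (Fin n) (Fin n) ℂ)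
    (G P : ℝ → Matrix (Fin n) (Fin m) ℂ) (S N : ℝ → Matrix (Fin m) (Fin m) ℂ) : Prop :=
  (∀ t ∈ T, (Q t).PosSemidef) ∧
  LocLp T 1 Q' ∧
  (∀ s ∈ T, ∀ t ∈ T, Q t - Q s = ∫ r in s..t, Q' r) ∧
  AEStronglyMeasurable J (volume.restrict T) ∧
  AEStronglyMeasurable R (volume.restrict T) ∧
  AEStronglyMeasurable K (volume.restrict T) ∧
  AEStronglyMeasurable G (volume.restrict T) ∧
  AEStronglyMeasurable P (volume.restrict T) ∧
  AEStronglyMeasurable S (volume.restrict T) ∧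
  AEStronglyMeasurable N (volume.restrict T) ∧
  (∀ᵐ t ∂(volume : Measure ℝ), t ∈ T →
    J t = -(J t)ᴴ ∧ N t = -(N t)ᴴ ∧
    Q t * K t + (K t)ᴴ * Q t = Q' t ∧
    (Matrix.fromBlocks (R t) (P t) ((P t)ᴴ) (S t)).PosSemidef ∧
    A t = (J t - R t) * Q t - K t ∧
    B t = G t - P t ∧
    C t = (G t + P t)ᴴ * Q t ∧
    D t = S t - N t)

/-! Along a solution `x` is absolutely continuous and `Q` is `W^{1,1}_loc`, so by the Lebesgue
differentiation theorem both are differentiable a.e. on the open set `T`, with derivatives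
`A x + B u` and `Q'`. The product rule then gives `d/dt ½ xᴴQx = Re((Qx)ᴴ ẋ) + ½ Re(xᴴQ'x)`.
Inserting the pH structure, the skew-Hermitian `J` and `N` contribute nothing to real parts,
`Q' = QK + KᴴQ` cancels the `K`-term of `ẋ`, and what is left is
`-[Qx; u]ᴴ W [Qx; u] + Re(yᴴu)`; the dissipation inequality is `W ≥ 0`. -/

open Filter

section FundamentalTheorem

variable {E : Type*} [NormedAddCommGroup E] [NormedSpace ℝ E] [CompleteSpace E] {f F : ℝ → E}

theorem ae_hasDerivAt_of_sub_eq_intervalIntegral {a b : ℝ} (hf : IntegrableOn f (Icc a b))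
    (hF : ∀ s ∈ Icc a b, ∀ t ∈ Icc a b, F t - F s = ∫ r in s..t, f r) :
    ∀ᵐ t, t ∈ Ioo a b → HasDerivAt F (f t) t := by
  rcases le_or_gt a b with hab | hba
  · have hfi : IntervalIntegrable f volume a b :=
      (intervalIntegrable_iff_integrableOn_Icc_of_le hab).2 hf
    filter_upwards [hfi.ae_hasDerivAt_integral] with t ht htab
    rw [uIcc_of_le hab] at ht
    refine ((ht (Ioo_subset_Icc_self htab) a (left_mem_Icc.2 hab)).const_add (F a))
      |>.congr_of_eventuallyEq ?_
    filter_upwards [Ioo_mem_nhds htab.1 htab.2] with s hs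
    rw [← hF a (left_mem_Icc.2 hab) s (Ioo_subset_Icc_self hs), add_sub_cancel]
  · simp [Ioo_eq_empty_of_le hba.le]

theorem IsOpen.ae_hasDerivAt_of_sub_eq_intervalIntegral {T : Set ℝ} (hT : IsOpen T)
    (hf : ∀ a ∈ T, ∀ b ∈ T, IntegrableOn f (Icc a b))
    (hF : ∀ s ∈ T, ∀ t ∈ T, F t - F s = ∫ r in s..t, f r) :
    ∀ᵐ t, t ∈ T → HasDerivAt F (f t) t := by
  have hlocal : ∀ᵐ t, ∀ p q : ℚ, (p : ℝ) ≤ q ∧ Icc (p : ℝ) q ⊆ T →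
      t ∈ Ioo (p : ℝ) q → HasDerivAt F (f t) t := by
    refine ae_all_iff.2 fun p => ae_all_iff.2 fun q => ?_
    by_cases hpq : (p : ℝ) ≤ q ∧ Icc (p : ℝ) q ⊆ T
    · obtain ⟨hle, hsub⟩ := hpq
      filter_upwards [_root_.ae_hasDerivAt_of_sub_eq_intervalIntegral
        (hf p (hsub (left_mem_Icc.2 hle)) q (hsub (right_mem_Icc.2 hle)))
        fun s hs t ht => hF s (hsub hs) t (hsub ht)] with t ht _ using ht
    · exact Eventually.of_forall fun t h => absurd h hpq
  filter_upwards [hlocal] with t ht htT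
  obtain ⟨ε, hε, hball⟩ := Metric.isOpen_iff.1 hT t htT
  rw [Real.ball_eq_Ioo] at hball
  obtain ⟨p, hp⟩ := exists_rat_btwn (sub_lt_self t hε)
  obtain ⟨q, hq⟩ := exists_rat_btwn (lt_add_of_pos_right t hε)
  exact ht p q ⟨(hp.2.trans hq.1).le, (Icc_subset_Ioo hp.1 hq.2).trans hball⟩ ⟨hp.2, hq.1⟩

end FundamentalTheorem

section Derivatives

variable {𝕜 ι κ : Type*} [RCLike 𝕜] [Fintype ι] [Fintype κ] {t : ℝ}

theorem HasDerivAt.mulVec {M : ℝ → Matrix ι κ 𝕜} {v : ℝ → κ → 𝕜} {M' : Matrix ι κ 𝕜}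
    {v' : κ → 𝕜} (hM : HasDerivAt M M' t) (hv : HasDerivAt v v' t) :
    HasDerivAt (fun s => M s *ᵥ v s) (M t *ᵥ v' + M' *ᵥ v t) t :=
  (Matrix.mulVecBilin ℝ ℝ : Matrix ι κ 𝕜 →ₗ[ℝ] (κ → 𝕜) →ₗ[ℝ] (ι → 𝕜)).toContinuousBilinearMap
    |>.hasDerivAt_of_bilinear (fun _ => hM) fun _ => hv

theorem HasDerivAt.dotProduct {v w : ℝ → ι → 𝕜} {v' w' : ι → 𝕜}
    (hv : HasDerivAt v v' t) (hw : HasDerivAt w w' t) :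
    HasDerivAt (fun s => v s ⬝ᵥ w s) (v t ⬝ᵥ w' + v' ⬝ᵥ w t) t :=
  (dotProductBilin ℝ ℝ : (ι → 𝕜) →ₗ[ℝ] (ι → 𝕜) →ₗ[ℝ] 𝕜).toContinuousBilinearMap
    |>.hasDerivAt_of_bilinear (fun _ => hv) fun _ => hw

end Derivatives

section QuadraticForms

variable {ι κ : Type*} [Fintype ι] [Fintype κ]

theorem star_mulVec_dotProduct (M : Matrix ι κ ℂ) (v : κ → ℂ) (w : ι → ℂ) :
    star (M *ᵥ v) ⬝ᵥ w = star v ⬝ᵥ (Mᴴ *ᵥ w) := by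
  rw [star_mulVec, ← dotProduct_mulVec]

theorem re_star_dotProduct_comm (v w : ι → ℂ) : (star v ⬝ᵥ w).re = (star w ⬝ᵥ v).re := by
  rw [star_dotProduct, Complex.star_def, Complex.conj_re]

theorem re_star_dotProduct_mulVec_eq_zero_of_skew {M : Matrix ι ι ℂ} (hM : M = -Mᴴ)
    (v : ι → ℂ) : (star v ⬝ᵥ (M *ᵥ v)).re = 0 := by
  have hM' : Mᴴ = -M := by nth_rewrite 2 [hM]; rw [neg_neg]
  have h := re_star_dotProduct_comm v (M *ᵥ v)
  rw [star_mulVec_dotProduct, hM', neg_mulVec, dotProduct_neg, Complex.neg_re] at h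
  linarith

theorem re_star_dotProduct_fromBlocks_mulVec (R : Matrix ι ι ℂ) (P : Matrix ι κ ℂ)
    (S : Matrix κ κ ℂ) (a : ι → ℂ) (b : κ → ℂ) :
    (star (Sum.elim a b) ⬝ᵥ (fromBlocks R P Pᴴ S *ᵥ Sum.elim a b)).re
      = (star a ⬝ᵥ (R *ᵥ a)).re + 2 * (star a ⬝ᵥ (P *ᵥ b)).re + (star b ⬝ᵥ (S *ᵥ b)).re := by
  have hPb : (star b ⬝ᵥ (Pᴴ *ᵥ a)).re = (star a ⬝ᵥ (P *ᵥ b)).re := by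
    rw [← star_mulVec_dotProduct, re_star_dotProduct_comm]
  rw [fromBlocks_mulVec, Sum.elim_comp_inl, Sum.elim_comp_inr, Function.star_sumElim,
    sumElim_dotProduct_sumElim]
  simp only [dotProduct_add, Complex.add_re, hPb]
  ring

theorem hasDerivAt_half_re_star_dotProduct_mulVec {x : ℝ → ι → ℂ} {Q : ℝ → Matrix ι ι ℂ}
    {x' : ι → ℂ} {Q' : Matrix ι ι ℂ} {t : ℝ} (hx : HasDerivAt x x' t) (hQ : HasDerivAt Q Q' t)
    (hQh : (Q t)ᴴ = Q t) :
    HasDerivAt (fun s => (1 / 2 : ℝ) * (star (x s) ⬝ᵥ (Q s *ᵥ x s)).re)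
      ((star (Q t *ᵥ x t) ⬝ᵥ x').re + 1 / 2 * (star (x t) ⬝ᵥ (Q' *ᵥ x t)).re) t := by
  refine ((Complex.reCLM.hasFDerivAt.comp_hasDerivAt t
    (hx.star.dotProduct (hQ.mulVec hx))).const_mul (1 / 2 : ℝ)).congr_deriv ?_
  have hsym : (star (x t) ⬝ᵥ (Q t *ᵥ x')).re = (star x' ⬝ᵥ (Q t *ᵥ x t)).re := by
    rw [re_star_dotProduct_comm, star_mulVec_dotProduct, hQh]
  simp only [Complex.reCLM_apply, dotProduct_add, Complex.add_re, hsym,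
    star_mulVec_dotProduct, hQh]
  ring

theorem pH_energy_rate_eq {Q Q' J R K : Matrix ι ι ℂ} {G P : Matrix ι κ ℂ}
    {S N : Matrix κ κ ℂ} {x : ι → ℂ} {u y : κ → ℂ} (hQ : Qᴴ = Q) (hJ : J = -Jᴴ) (hN : N = -Nᴴ)
    (hK : Q * K + Kᴴ * Q = Q') (hy : y = ((G + P)ᴴ * Q) *ᵥ x + (S - N) *ᵥ u) :
    (star (Q *ᵥ x) ⬝ᵥ (((J - R) * Q - K) *ᵥ x + (G - P) *ᵥ u)).re
        + 1 / 2 * (star x ⬝ᵥ (Q' *ᵥ x)).re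
      = -(star (Sum.elim (Q *ᵥ x) u) ⬝ᵥ (fromBlocks R P Pᴴ S *ᵥ Sum.elim (Q *ᵥ x) u)).re
        + (star y ⬝ᵥ u).re := by
  set z := Q *ᵥ x
  have hQx (w : ι → ℂ) : star x ⬝ᵥ (Q *ᵥ w) = star z ⬝ᵥ w := by
    rw [star_mulVec_dotProduct, hQ]
  have hflow : (star z ⬝ᵥ (((J - R) * Q - K) *ᵥ x + (G - P) *ᵥ u)).re
      = (star z ⬝ᵥ (J *ᵥ z)).re - (star z ⬝ᵥ (R *ᵥ z)).re - (star z ⬝ᵥ (K *ᵥ x)).re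
        + (star z ⬝ᵥ (G *ᵥ u)).re - (star z ⬝ᵥ (P *ᵥ u)).re := by
    simp only [sub_mulVec, ← mulVec_mulVec, dotProduct_add, dotProduct_sub,
      Complex.add_re, Complex.sub_re]
    ring
  have hstorage : 1 / 2 * (star x ⬝ᵥ (Q' *ᵥ x)).re = (star z ⬝ᵥ (K *ᵥ x)).re := by
    rw [← hK, add_mulVec, ← mulVec_mulVec, ← mulVec_mulVec, dotProduct_add, hQx,
      ← star_mulVec_dotProduct, Complex.add_re, re_star_dotProduct_comm (K *ᵥ x)]
    ring
  have hsupply : (star y ⬝ᵥ u).re = (star z ⬝ᵥ (G *ᵥ u)).re + (star z ⬝ᵥ (P *ᵥ u)).re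
      + (star u ⬝ᵥ (S *ᵥ u)).re - (star u ⬝ᵥ (N *ᵥ u)).re := by
    rw [hy, ← mulVec_mulVec, star_add, add_dotProduct, Complex.add_re, star_mulVec_dotProduct,
      conjTranspose_conjTranspose, re_star_dotProduct_comm ((S - N) *ᵥ u)]
    simp only [sub_mulVec, add_mulVec, dotProduct_add, dotProduct_sub, Complex.add_re,
      Complex.sub_re]
    ring
  rw [re_star_dotProduct_fromBlocks_mulVec, hflow, hstorage, hsupply]
  linarith [re_star_dotProduct_mulVec_eq_zero_of_skew hJ z,
    re_star_dotProduct_mulVec_eq_zero_of_skew hN u]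

end QuadraticForms

theorem pH_powerBalance_and_dissipation_general
    (T : Set ℝ) (hTopen : IsOpen T)
    (A : ℝ → Matrix (Fin n) (Fin n) ℂ) (B : ℝ → Matrix (Fin n) (Fin m) ℂ)
    (C : ℝ → Matrix (Fin m) (Fin n) ℂ) (D : ℝ → Matrix (Fin m) (Fin m) ℂ)
    (Q Q' J R K : ℝ → Matrix (Fin n) (Fin n) ℂ)
    (G P : ℝ → Matrix (Fin n) (Fin m) ℂ) (S N : ℝ → Matrix (Fin m) (Fin m) ℂ)
    (hPH : IsPH T A B C D Q Q' J R K G P S N)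
    (x : ℝ → Fin n → ℂ) (u y : ℝ → Fin m → ℂ)
    (hsol : IsSolution T A B C D x u y) :
    ∀ᵐ t ∂(volume : Measure ℝ), t ∈ T →
      HasDerivAt (fun s => (1 / 2 : ℝ) * (star (x s) ⬝ᵥ (Q s *ᵥ x s)).re)
        (-(star (Sum.elim (Q t *ᵥ x t) (u t)) ⬝ᵥ
            (Matrix.fromBlocks (R t) (P t) ((P t)ᴴ) (S t) *ᵥ Sum.elim (Q t *ᵥ x t) (u t))).re
          + (star (y t) ⬝ᵥ u t).re) t ∧
      -(star (Sum.elim (Q t *ᵥ x t) (u t)) ⬝ᵥ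
            (Matrix.fromBlocks (R t) (P t) ((P t)ᴴ) (S t) *ᵥ Sum.elim (Q t *ᵥ x t) (u t))).re
          + (star (y t) ⬝ᵥ u t).re ≤ (star (y t) ⬝ᵥ u t).re := by
  obtain ⟨-, -, hxint, hxeq, hyeq⟩ := hsol
  obtain ⟨hQpsd, hQ'loc, hQeq, -, -, -, -, -, -, -, hstruct⟩ := hPH
  filter_upwards [hTopen.ae_hasDerivAt_of_sub_eq_intervalIntegral hxint hxeq,
    hTopen.ae_hasDerivAt_of_sub_eq_intervalIntegral
      (fun a ha b hb => memLp_one_iff_integrable.1 (hQ'loc a ha b hb)) hQeq, hstruct, hyeq]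
    with t hx hQ hpH hy htT
  obtain ⟨hJ, hN, hK, hW, hA, hB, hC, hD⟩ := hpH htT
  have hQh : (Q t)ᴴ = Q t := (hQpsd t htT).1
  have hy' : y t = ((G t + P t)ᴴ * Q t) *ᵥ x t + (S t - N t) *ᵥ u t := by rw [hy htT, hC, hD]
  rw [hA, hB] at hx
  exact ⟨pH_energy_rate_eq hQh hJ hN hK hy' ▸
      hasDerivAt_half_re_star_dotProduct_mulVec (hx htT) (hQ htT) hQh,
    add_le_of_nonpos_left (neg_nonpos.2 (hW.re_dotProduct_nonneg _))⟩

/-- **Power balance and dissipation for port-Hamiltonian LTV systems.**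
If the LTV system is port-Hamiltonian, then every state-input-output solution `(x,u,y)`
satisfies, for a.e. `t ∈ 𝕋`, the power balance equation
`d/dt H(t,x(t)) = −[Q(t)x(t); u(t)]ᴴ W(t) [Q(t)x(t); u(t)] + Re(y(t)ᴴ u(t))`
where `H(t,x) = ½ xᴴ Q(t) x` and `W = [[R, P],[Pᴴ, S]]`; in particular the dissipation
inequality `d/dt H(t,x(t)) ≤ Re(y(t)ᴴ u(t))` holds for a.e. `t ∈ 𝕋`. -/
theorem pH_powerBalance_and_dissipation
    (T : Set ℝ) (hTopen : IsOpen T) (hTconn : T.OrdConnected)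
    (A : ℝ → Matrix (Fin n) (Fin n) ℂ) (B : ℝ → Matrix (Fin n) (Fin m) ℂ)
    (C : ℝ → Matrix (Fin m) (Fin n) ℂ) (D : ℝ → Matrix (Fin m) (Fin m) ℂ)
    (hLTV : IsLTV T A B C D)
    (Q Q' J R K : ℝ → Matrix (Fin n) (Fin n) ℂ)
    (G P : ℝ → Matrix (Fin n) (Fin m) ℂ) (S N : ℝ → Matrix (Fin m) (Fin m) ℂ)
    (hPH : IsPH T A B C D Q Q' J R K G P S N)
    (x : ℝ → Fin n → ℂ) (u y : ℝ → Fin m → ℂ)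
    (hsol : IsSolution T A B C D x u y) :
    ∀ᵐ t ∂(volume : Measure ℝ), t ∈ T →
      HasDerivAt (fun s => (1 / 2 : ℝ) * (star (x s) ⬝ᵥ (Q s *ᵥ x s)).re)
        (-(star (Sum.elim (Q t *ᵥ x t) (u t)) ⬝ᵥ
            (Matrix.fromBlocks (R t) (P t) ((P t)ᴴ) (S t) *ᵥ Sum.elim (Q t *ᵥ x t) (u t))).re
          + (star (y t) ⬝ᵥ u t).re) t ∧
      -(star (Sum.elim (Q t *ᵥ x t) (u t)) ⬝ᵥ
            (Matrix.fromBlocks (R t) (P t) ((P t)ᴴ) (S t) *ᵥ Sum.elim (Q t *ᵥ x t) (u t))).re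
          + (star (y t) ⬝ᵥ u t).re ≤ (star (y t) ⬝ᵥ u t).re :=
  pH_powerBalance_and_dissipation_general T hTopen A B C D Q Q' J R K G P S N hPH x u y hsol
end
end

section
/- Time reparametrization: let 𝕋̂ ⊆ ℝ be another open interval and θ ∈ C¹(𝕋̂, 𝕋) a diffeomorphism with θ̇ > 0 pointwise, and define Â = θ̇·(A∘θ), B̂ = θ̇·(B∘θ), Ĉ = θ̇·(C∘θ), D̂ = θ̇·(D∘θ). Then (x,u,y) is a state-input-output solution of the LTV system with coefficients (A,B,C,D) on 𝕋 if and only if (x∘θ, u∘θ, θ̇·(y∘θ)) is a state-input-output solution of the LTV system with coefficients (Â,B̂,Ĉ,D̂) on 𝕋̂. Moreover the supply is invariant: for all t̂₀ ≤ t̂₁ in 𝕋̂, setting t₀ = θ(t̂₀), t₁ = θ(t̂₁), one has t₀ ≤ t₁ and ∫_{t̂₀}^{t̂₁} Re( (θ̇(t̂) (y∘θ)(t̂))* (u∘θ)(t̂) ) dt̂ = ∫_{t₀}^{t₁} Re( y(t)* u(t) ) dt. -/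
open MeasureTheory Matrix Set
open scoped ENNReal ComplexOrder

noncomputable section

attribute [local instance] Matrix.normedAddCommGroup Matrix.normedSpace

variable {n m : ℕ}

/-!
The substitution `r = θ t` turns `∫ r in θ a..θ b, g r` into `∫ t in a..b, θ' t • g (θ t)`, which
carries the integral equation for the state, local integrability and the supply over. On compact
intervals `θ'` is bounded and bounded away from `0`, so `Lᵖ`-membership is transferred as well, and
null sets are transferred because `θ` and its inverse are differentiable. The inverse of such a `θ`
is again a time reparametrization, with derivative `(θ' ∘ θ⁻¹)⁻¹`, and transforming back recovers
the original system; so the converse is the direct implication applied to `θ⁻¹`.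
-/

open Function

theorem ContinuousOn.memLp_top_of_isCompact {α F : Type*} [TopologicalSpace α] [MeasurableSpace α]
    [OpensMeasurableSpace α] [NormedAddCommGroup F] {μ : Measure α} {s : Set α} {f : α → F}
    (hf : ContinuousOn f s) (hs : IsCompact s) (hms : MeasurableSet s) :
    MemLp f ∞ (μ.restrict s) := by
  obtain ⟨C, hC⟩ := hs.exists_bound_of_continuousOn hf
  exact memLp_top_of_bound (hf.aestronglyMeasurable_of_isCompact hs hms) C
    (ae_restrict_of_forall_mem hms hC)

section LocLp

variable {E : Type*} [NormedAddCommGroup E] {T : Set ℝ} {p : ℝ≥0∞} {f g : ℝ → E}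

theorem locLp_of_forall_le
    (hf : ∀ a ∈ T, ∀ b ∈ T, a ≤ b → MemLp f p (volume.restrict (Icc a b))) : LocLp T p f := by
  intro a ha b hb
  rcases le_or_gt a b with hab | hba
  · exact hf a ha b hb hab
  · simp [Icc_eq_empty_of_lt hba]

theorem LocLp.congr (hT : T.OrdConnected) (hf : LocLp T p f) (hfg : EqOn f g T) : LocLp T p g :=
  fun a ha b hb => (hf a ha b hb).ae_eq <|
    (ae_restrict_mem measurableSet_Icc).mono fun _ ht => hfg (hT.out ha hb ht)

end LocLp

theorem IsSolution.congr {T : Set ℝ} (hT : T.OrdConnected)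
    {A A' : ℝ → Matrix (Fin n) (Fin n) ℂ} {B B' : ℝ → Matrix (Fin n) (Fin m) ℂ}
    {C C' : ℝ → Matrix (Fin m) (Fin n) ℂ} {D D' : ℝ → Matrix (Fin m) (Fin m) ℂ}
    {x x' : ℝ → Fin n → ℂ} {u u' y y' : ℝ → Fin m → ℂ} (hsol : IsSolution T A B C D x u y)
    (hA : EqOn A A' T) (hB : EqOn B B' T) (hC : EqOn C C' T) (hD : EqOn D D' T)
    (hx : EqOn x x' T) (hu : EqOn u u' T) (hy : EqOn y y' T) :
    IsSolution T A' B' C' D' x' u' y' := by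
  obtain ⟨hu₂, hy₂, hint, hode, hout⟩ := hsol
  have hrhs : EqOn (fun r => A r *ᵥ x r + B r *ᵥ u r) (fun r => A' r *ᵥ x' r + B' r *ᵥ u' r) T :=
    fun r hr => by simp only [hA hr, hB hr, hx hr, hu hr]
  refine ⟨hu₂.congr hT hu, hy₂.congr hT hy, fun a ha b hb => ?_, fun s hs t ht => ?_, ?_⟩
  · exact (hint a ha b hb).congr_fun (hrhs.mono (hT.out ha hb)) measurableSet_Icc
  · rw [← hx hs, ← hx ht, hode s hs t ht]
    exact intervalIntegral.integral_congr (hrhs.mono (hT.uIcc_subset hs ht))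
  · filter_upwards [hout] with t ht htT
    rw [← hy htT, ht htT, hC htT, hD htT, hx htT, hu htT]

structure IsTimeReparam (U : Set ℝ) (θ θ' : ℝ → ℝ) : Prop where
  isOpen : IsOpen U
  ordConnected : U.OrdConnected
  hasDerivAt : ∀ t ∈ U, HasDerivAt θ (θ' t) t
  continuousOn_deriv : ContinuousOn θ' U
  deriv_pos : ∀ t ∈ U, 0 < θ' t

namespace IsTimeReparam

variable {U : Set ℝ} {θ θ' : ℝ → ℝ} (h : IsTimeReparam U θ θ')
include h

theorem continuousOn : ContinuousOn θ U :=
  fun t ht => (h.hasDerivAt t ht).continuousAt.continuousWithinAt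

theorem strictMonoOn : StrictMonoOn θ U := by
  refine strictMonoOn_of_deriv_pos h.ordConnected.convex h.continuousOn fun t ht => ?_
  rw [h.isOpen.interior_eq] at ht
  rw [(h.hasDerivAt t ht).deriv]
  exact h.deriv_pos t ht

theorem hasStrictDerivAt {t : ℝ} (ht : t ∈ U) : HasStrictDerivAt θ (θ' t) t :=
  hasStrictDerivAt_of_hasDerivAt_of_continuousAt
    (Filter.eventually_of_mem (h.isOpen.mem_nhds ht) h.hasDerivAt)
    (h.continuousOn_deriv.continuousAt (h.isOpen.mem_nhds ht))

theorem isOpen_image : IsOpen (θ '' U) := by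
  refine isOpen_iff_mem_nhds.2 ?_
  rintro _ ⟨t, ht, rfl⟩
  rw [← (h.hasStrictDerivAt ht).map_nhds_eq (h.deriv_pos t ht).ne']
  exact Filter.image_mem_map (h.isOpen.mem_nhds ht)

theorem ordConnected_image : (θ '' U).OrdConnected :=
  (h.ordConnected.isPreconnected.image θ h.continuousOn).ordConnected

theorem measure_image_eq_zero {S : Set ℝ} (hS : S ⊆ U) (hS₀ : volume S = 0) :
    volume (θ '' S) = 0 :=
  addHaar_image_eq_zero_of_differentiableOn_of_addHaar_eq_zero volume
    (fun t ht => (h.hasDerivAt t (hS ht)).differentiableAt.differentiableWithinAt) hS₀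

theorem leftInvOn : LeftInvOn (invFunOn θ U) θ U :=
  h.strictMonoOn.injOn.leftInvOn_invFunOn

theorem image_invFunOn : invFunOn θ U '' (θ '' U) = U :=
  h.leftInvOn.image_image

theorem strictMonoOn_invFunOn : StrictMonoOn (invFunOn θ U) (θ '' U) := by
  rintro _ ⟨s, hs, rfl⟩ _ ⟨t, ht, rfl⟩ hst
  rw [h.leftInvOn hs, h.leftInvOn ht]
  exact (h.strictMonoOn.lt_iff_lt hs ht).1 hst

theorem continuousAt_invFunOn {r : ℝ} (hr : r ∈ θ '' U) : ContinuousAt (invFunOn θ U) r := by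
  refine h.strictMonoOn_invFunOn.continuousAt_of_image_mem_nhds (h.isOpen_image.mem_nhds hr) ?_
  rw [h.image_invFunOn]
  exact h.isOpen.mem_nhds (invFunOn_mem hr)

theorem hasDerivAt_invFunOn {r : ℝ} (hr : r ∈ θ '' U) :
    HasDerivAt (invFunOn θ U) (θ' (invFunOn θ U r))⁻¹ r :=
  (h.hasDerivAt _ (invFunOn_mem hr)).of_local_left_inverse (h.continuousAt_invFunOn hr)
    (h.deriv_pos _ (invFunOn_mem hr)).ne'
    (Filter.eventually_of_mem (h.isOpen_image.mem_nhds hr) fun _ hs => invFunOn_eq hs)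

theorem symm : IsTimeReparam (θ '' U) (invFunOn θ U) (fun r => (θ' (invFunOn θ U r))⁻¹) where
  isOpen := h.isOpen_image
  ordConnected := h.ordConnected_image
  hasDerivAt _ hr := h.hasDerivAt_invFunOn hr
  continuousOn_deriv :=
    (h.continuousOn_deriv.comp (fun _ hr => (h.continuousAt_invFunOn hr).continuousWithinAt)
      fun _ hr => invFunOn_mem hr).inv₀ fun _ hr => (h.deriv_pos _ (invFunOn_mem hr)).ne'
  deriv_pos _ hr := inv_pos.2 (h.deriv_pos _ (invFunOn_mem hr))

theorem ae_comp {p : ℝ → Prop} (hp : ∀ᵐ r, r ∈ θ '' U → p r) : ∀ᵐ t, t ∈ U → p (θ t) := by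
  rw [ae_iff] at hp ⊢
  simp only [Classical.not_imp] at hp ⊢
  refine measure_mono_null ?_ (h.symm.measure_image_eq_zero (fun _ hr => hr.1) hp)
  rintro t ⟨htU, hpt⟩
  exact ⟨θ t, ⟨mem_image_of_mem θ htU, hpt⟩, h.leftInvOn htU⟩

section ChangeOfVariables

variable {E : Type*} [NormedAddCommGroup E] [NormedSpace ℝ E] {a b : ℝ}

theorem integral_deriv_smul_comp (ha : a ∈ U) (hb : b ∈ U) (g : ℝ → E) :
    ∫ t in a..b, θ' t • g (θ t) = ∫ r in θ a..θ b, g r := by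
  have hab : uIcc a b ⊆ U := h.ordConnected.uIcc_subset ha hb
  exact intervalIntegral.integral_deriv_smul_comp_of_deriv_nonneg (h.continuousOn.mono hab)
    (fun t ht => h.hasDerivAt t (hab (Ioo_subset_Icc_self ht)))
    (fun t ht => (h.deriv_pos t (hab (Ioo_subset_Icc_self ht))).le)

theorem integrableOn_deriv_smul_comp_iff (ha : a ∈ U) (hb : b ∈ U) (hab : a ≤ b) {g : ℝ → E} :
    IntegrableOn (fun t => θ' t • g (θ t)) (Icc a b) ↔ IntegrableOn g (Icc (θ a) (θ b)) := by
  have hI : Icc a b ⊆ U := h.ordConnected.out ha hb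
  exact integrableOn_Icc_deriv_smul_iff_of_deriv_nonneg (h.continuousOn.mono hI)
    (fun t ht => h.hasDerivAt t (hI (Ioo_subset_Icc_self ht)))
    (fun t ht => (h.deriv_pos t (hI (Ioo_subset_Icc_self ht))).le) hab

theorem integrableOn_deriv_smul_comp (ha : a ∈ U) (hb : b ∈ U) {g : ℝ → E}
    (hg : IntegrableOn g (Icc (θ a) (θ b))) : IntegrableOn (fun t => θ' t • g (θ t)) (Icc a b) := by
  rcases le_or_gt a b with hab | hba
  · exact (h.integrableOn_deriv_smul_comp_iff ha hb hab).2 hg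
  · simp [Icc_eq_empty_of_lt hba]

theorem memLp_comp {p : ℝ≥0∞} (hp₁ : 1 ≤ p) (hp : p ≠ ∞) (ha : a ∈ U) (hb : b ∈ U) (hab : a ≤ b)
    {g : ℝ → E} (hg : MemLp g p (volume.restrict (Icc (θ a) (θ b)))) :
    MemLp (fun t => g (θ t)) p (volume.restrict (Icc a b)) := by
  have hI : Icc a b ⊆ U := h.ordConnected.out ha hb
  obtain ⟨t₀, ht₀, hmin⟩ :=
    isCompact_Icc.exists_isMinOn (nonempty_Icc.2 hab) (h.continuousOn_deriv.mono hI)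
  have hpos : 0 < θ' t₀ := h.deriv_pos t₀ (hI ht₀)
  have hmeas : AEStronglyMeasurable (fun t => g (θ t)) (volume.restrict (Icc a b)) := by
    -- `g ∘ θ = θ'⁻¹ • (θ' • g ∘ θ)`, and the second factor is integrable
    have hint := (h.integrableOn_deriv_smul_comp_iff ha hb hab).2 (hg.integrable hp₁)
    have hinv : ContinuousOn (fun t => (θ' t)⁻¹) (Icc a b) :=
      (h.continuousOn_deriv.mono hI).inv₀ fun t ht => (h.deriv_pos t (hI ht)).ne'
    refine ((hinv.aestronglyMeasurable measurableSet_Icc).smul hint.1).congr ?_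
    filter_upwards [ae_restrict_mem measurableSet_Icc] with t ht
    exact inv_smul_smul₀ (h.deriv_pos t (hI ht)).ne' _
  have hpow : IntegrableOn (fun t => θ' t • ‖g (θ t)‖ ^ p.toReal) (Icc a b) :=
    (h.integrableOn_deriv_smul_comp_iff ha hb hab).2 (hg.integrable_norm_rpow')
  rw [← integrable_norm_rpow_iff hmeas (zero_lt_one.trans_le hp₁).ne' hp]
  refine (hpow.const_mul (θ' t₀)⁻¹).mono'
    (hmeas.norm.aemeasurable.pow_const _).aestronglyMeasurable ?_
  filter_upwards [ae_restrict_mem measurableSet_Icc] with t ht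
  have hratio : 1 ≤ (θ' t₀)⁻¹ * θ' t := by
    rw [inv_mul_eq_div, one_le_div hpos]
    exact hmin ht
  rw [Real.norm_of_nonneg (by positivity), smul_eq_mul, ← mul_assoc]
  exact le_mul_of_one_le_left (by positivity) hratio

theorem memLp_deriv_smul_comp {p : ℝ≥0∞} (hp₁ : 1 ≤ p) (hp : p ≠ ∞) (ha : a ∈ U) (hb : b ∈ U)
    (hab : a ≤ b) {g : ℝ → E} (hg : MemLp g p (volume.restrict (Icc (θ a) (θ b)))) :
    MemLp (fun t => θ' t • g (θ t)) p (volume.restrict (Icc a b)) :=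
  (h.memLp_comp hp₁ hp ha hb hab hg).smul
    ((h.continuousOn_deriv.mono (h.ordConnected.out ha hb)).memLp_top_of_isCompact
      isCompact_Icc measurableSet_Icc)

theorem locLp_comp {p : ℝ≥0∞} (hp₁ : 1 ≤ p) (hp : p ≠ ∞) {g : ℝ → E}
    (hg : LocLp (θ '' U) p g) : LocLp U p (fun t => g (θ t)) :=
  locLp_of_forall_le fun _ ha _ hb hab => h.memLp_comp hp₁ hp ha hb hab
    (hg _ (mem_image_of_mem θ ha) _ (mem_image_of_mem θ hb))

theorem locLp_deriv_smul_comp {p : ℝ≥0∞} (hp₁ : 1 ≤ p) (hp : p ≠ ∞) {g : ℝ → E}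
    (hg : LocLp (θ '' U) p g) : LocLp U p (fun t => θ' t • g (θ t)) :=
  locLp_of_forall_le fun _ ha _ hb hab => h.memLp_deriv_smul_comp hp₁ hp ha hb hab
    (hg _ (mem_image_of_mem θ ha) _ (mem_image_of_mem θ hb))

end ChangeOfVariables

theorem isSolution_comp {A : ℝ → Matrix (Fin n) (Fin n) ℂ} {B : ℝ → Matrix (Fin n) (Fin m) ℂ}
    {C : ℝ → Matrix (Fin m) (Fin n) ℂ} {D : ℝ → Matrix (Fin m) (Fin m) ℂ}
    {x : ℝ → Fin n → ℂ} {u y : ℝ → Fin m → ℂ} (hsol : IsSolution (θ '' U) A B C D x u y) :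
    IsSolution U (fun t => θ' t • A (θ t)) (fun t => θ' t • B (θ t))
      (fun t => θ' t • C (θ t)) (fun t => θ' t • D (θ t))
      (fun t => x (θ t)) (fun t => u (θ t)) (fun t => θ' t • y (θ t)) := by
  obtain ⟨hu, hy, hint, hode, hout⟩ := hsol
  have hθU : ∀ t ∈ U, θ t ∈ θ '' U := fun t ht => mem_image_of_mem θ ht
  have hrhs : ∀ t, (θ' t • A (θ t)) *ᵥ x (θ t) + (θ' t • B (θ t)) *ᵥ u (θ t) =
      θ' t • (A (θ t) *ᵥ x (θ t) + B (θ t) *ᵥ u (θ t)) := fun t => by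
    rw [smul_mulVec, smul_mulVec, smul_add]
  refine ⟨h.locLp_comp one_le_two ENNReal.ofNat_ne_top hu,
    h.locLp_deriv_smul_comp one_le_two ENNReal.ofNat_ne_top hy, fun a ha b hb => ?_,
    fun s hs t ht => ?_, ?_⟩
  · simp only [hrhs]
    exact h.integrableOn_deriv_smul_comp ha hb (hint _ (hθU a ha) _ (hθU b hb))
  · simp only [hrhs]
    rw [h.integral_deriv_smul_comp hs ht (fun r => A r *ᵥ x r + B r *ᵥ u r)]
    exact hode _ (hθU s hs) _ (hθU t ht)
  · filter_upwards [h.ae_comp hout] with t ht htU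
    rw [ht htU, smul_mulVec, smul_mulVec, smul_add]

theorem isSolution_of_isSolution_comp {A : ℝ → Matrix (Fin n) (Fin n) ℂ}
    {B : ℝ → Matrix (Fin n) (Fin m) ℂ} {C : ℝ → Matrix (Fin m) (Fin n) ℂ}
    {D : ℝ → Matrix (Fin m) (Fin m) ℂ} {x : ℝ → Fin n → ℂ} {u y : ℝ → Fin m → ℂ}
    (hsol : IsSolution U (fun t => θ' t • A (θ t)) (fun t => θ' t • B (θ t))
      (fun t => θ' t • C (θ t)) (fun t => θ' t • D (θ t))
      (fun t => x (θ t)) (fun t => u (θ t)) (fun t => θ' t • y (θ t))) :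
    IsSolution (θ '' U) A B C D x u y := by
  rw [← h.image_invFunOn] at hsol
  refine (h.symm.isSolution_comp hsol).congr h.ordConnected_image ?_ ?_ ?_ ?_ ?_ ?_ ?_ <;>
  · intro r hr
    simp only [inv_smul_smul₀ (h.deriv_pos _ (invFunOn_mem hr)).ne', invFunOn_eq hr]

theorem integral_supply_comp {ι : Type*} [Fintype ι] {a b : ℝ} (ha : a ∈ U) (hb : b ∈ U)
    (u y : ℝ → ι → ℂ) :
    ∫ t in a..b, (star (θ' t • y (θ t)) ⬝ᵥ u (θ t)).re =
      ∫ r in θ a..θ b, (star (y r) ⬝ᵥ u r).re := by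
  simp only [star_smul, star_trivial, smul_dotProduct, Complex.smul_re]
  exact h.integral_deriv_smul_comp ha hb (fun r => (star (y r) ⬝ᵥ u r).re)

end IsTimeReparam

theorem time_reparametrization_general
    (T Th : Set ℝ)
    (hThopen : IsOpen Th) (hThconn : Th.OrdConnected)
    (A : ℝ → Matrix (Fin n) (Fin n) ℂ) (B : ℝ → Matrix (Fin n) (Fin m) ℂ)
    (C : ℝ → Matrix (Fin m) (Fin n) ℂ) (D : ℝ → Matrix (Fin m) (Fin m) ℂ)
    (θ θ' : ℝ → ℝ)
    (hθdiff : ∀ t ∈ Th, HasDerivAt θ (θ' t) t)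
    (hθ'cont : ContinuousOn θ' Th)
    (hθ'pos : ∀ t ∈ Th, 0 < θ' t)
    (hθsurj : θ '' Th = T) :
    (∀ (x : ℝ → Fin n → ℂ) (u y : ℝ → Fin m → ℂ),
      IsSolution T A B C D x u y ↔
        IsSolution Th (fun t => θ' t • A (θ t)) (fun t => θ' t • B (θ t))
          (fun t => θ' t • C (θ t)) (fun t => θ' t • D (θ t))
          (fun t => x (θ t)) (fun t => u (θ t)) (fun t => θ' t • y (θ t))) ∧
    (∀ (x : ℝ → Fin n → ℂ) (u y : ℝ → Fin m → ℂ), IsSolution T A B C D x u y →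
      ∀ th₀ ∈ Th, ∀ th₁ ∈ Th, th₀ ≤ th₁ →
        θ th₀ ≤ θ th₁ ∧
        (∫ t in th₀..th₁, (star (θ' t • y (θ t)) ⬝ᵥ u (θ t)).re) =
          ∫ t in (θ th₀)..(θ th₁), (star (y t) ⬝ᵥ u t).re) := by
  have hθ : IsTimeReparam Th θ θ' := ⟨hThopen, hThconn, hθdiff, hθ'cont, hθ'pos⟩
  subst hθsurj
  exact ⟨fun _ _ _ => ⟨hθ.isSolution_comp, hθ.isSolution_of_isSolution_comp⟩,
    fun _ u y _ t₀ h₀ t₁ h₁ h₀₁ =>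
      ⟨hθ.strictMonoOn.monotoneOn h₀ h₁ h₀₁, hθ.integral_supply_comp h₀ h₁ u y⟩⟩

/-- **Time reparametrization.** Let `𝕋̂` be another open interval and `θ ∈ C¹(𝕋̂, 𝕋)` a
diffeomorphism with `θ̇ > 0` pointwise; define `Â = θ̇·(A∘θ)`, `B̂ = θ̇·(B∘θ)`,
`Ĉ = θ̇·(C∘θ)`, `D̂ = θ̇·(D∘θ)`. Then `(x,u,y)` solves the original system on `𝕋` iff
`(x∘θ, u∘θ, θ̇·(y∘θ))` solves the transformed system on `𝕋̂`; moreover the supply is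
invariant under the time transformation. -/
theorem time_reparametrization
    (T Th : Set ℝ) (hTopen : IsOpen T) (hTconn : T.OrdConnected)
    (hThopen : IsOpen Th) (hThconn : Th.OrdConnected)
    (A : ℝ → Matrix (Fin n) (Fin n) ℂ) (B : ℝ → Matrix (Fin n) (Fin m) ℂ)
    (C : ℝ → Matrix (Fin m) (Fin n) ℂ) (D : ℝ → Matrix (Fin m) (Fin m) ℂ)
    (hLTV : IsLTV T A B C D)
    (θ θ' : ℝ → ℝ)
    (hθdiff : ∀ t ∈ Th, HasDerivAt θ (θ' t) t)
    (hθ'cont : ContinuousOn θ' Th)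
    (hθ'pos : ∀ t ∈ Th, 0 < θ' t)
    (hθsurj : θ '' Th = T) :
    (∀ (x : ℝ → Fin n → ℂ) (u y : ℝ → Fin m → ℂ),
      IsSolution T A B C D x u y ↔
        IsSolution Th (fun t => θ' t • A (θ t)) (fun t => θ' t • B (θ t))
          (fun t => θ' t • C (θ t)) (fun t => θ' t • D (θ t))
          (fun t => x (θ t)) (fun t => u (θ t)) (fun t => θ' t • y (θ t))) ∧
    (∀ (x : ℝ → Fin n → ℂ) (u y : ℝ → Fin m → ℂ), IsSolution T A B C D x u y →
      ∀ th₀ ∈ Th, ∀ th₁ ∈ Th, th₀ ≤ th₁ →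
        θ th₀ ≤ θ th₁ ∧
        (∫ t in th₀..th₁, (star (θ' t • y (θ t)) ⬝ᵥ u (θ t)).re) =
          ∫ t in (θ th₀)..(θ th₁), (star (y t) ⬝ᵥ u t).re) :=
  time_reparametrization_general T Th hThopen hThconn A B C D θ θ' hθdiff hθ'cont hθ'pos hθsurj
end
end

section
/- Monotonicity of the available storage along trajectories starting at rest: let t₋₁ ≤ t₀ ≤ t₁ in 𝕋 and let (x,u,y) be a state-input-output solution of the LTV system with x(t₋₁) = 0. Then V_a(t₁, x(t₁)) ≤ V_a(t₀, x(t₀)) + ∫_{t₀}^{t₁} Re(y(s)* u(s)) ds; in particular, if V_a(t₀, x(t₀)) is finite, then V_a(t₁, x(t₁)) is finite. -/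
open MeasureTheory Matrix Set
open scoped ENNReal ComplexOrder

noncomputable section

attribute [local instance] Matrix.normedAddCommGroup Matrix.normedSpace

variable {n m : ℕ}

/-- The available storage of the LTV system at time `t₀` and state `x₀`, with values in
`[0, +∞]`. -/
noncomputable def availableStorage (T : Set ℝ)
    (A : ℝ → Matrix (Fin n) (Fin n) ℂ) (B : ℝ → Matrix (Fin n) (Fin m) ℂ)
    (C : ℝ → Matrix (Fin m) (Fin n) ℂ) (D : ℝ → Matrix (Fin m) (Fin m) ℂ)
    (t₀ : ℝ) (x₀ : Fin n → ℂ) : ℝ≥0∞ :=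
  ⨆ (t₁ : ℝ) (_ : t₁ ∈ T) (_ : t₀ ≤ t₁) (x : ℝ → Fin n → ℂ) (u : ℝ → Fin m → ℂ)
      (y : ℝ → Fin m → ℂ) (_ : IsSolution T A B C D x u y) (_ : x t₀ = x₀),
    ENNReal.ofReal (-∫ t in t₀..t₁, (star (y t) ⬝ᵥ u t).re)

/-
Dynamic programming: whatever a competitor for `V_a(t₁, x(t₁))` does after `t₁` can be preceded
by `(x, u, y)` on `[t₀, t₁]`, and the spliced triple is again a solution. It competes for
`V_a(t₀, x(t₀))` and extracts the competitor's energy minus `∫_{t₀}^{t₁} Re(y* u)`.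
-/

lemma integrable_re_star_dotProduct {α ι : Type*} [MeasurableSpace α] {μ : Measure α} [Fintype ι]
    {u y : α → ι → ℂ} (hu : MemLp u 2 μ) (hy : MemLp y 2 μ) :
    Integrable (fun t => (star (y t) ⬝ᵥ u t).re) μ := by
  simp only [dotProduct, Pi.star_apply, Complex.re_sum]
  exact integrable_finsetSum _ fun i _ => ((hy.eval i).star.integrable_mul (hu.eval i)).re

lemma coe_ofReal_add_le_coe_add {a c : ℝ} {V : ℝ≥0∞} (ha : ENNReal.ofReal a ≤ V)
    (hc : ENNReal.ofReal (-c) ≤ V) : (ENNReal.ofReal (a + c) : EReal) ≤ V + c := by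
  have hmax : ((max a (-c) : ℝ) : EReal) ≤ V := by
    calc ((max a (-c) : ℝ) : EReal) ≤ (ENNReal.ofReal (max a (-c)) : EReal) := by
          rw [EReal.coe_ennreal_ofReal]
          exact EReal.coe_le_coe_iff.2 (le_max_left _ _)
      _ ≤ V := by
          rw [ENNReal.ofReal_max]
          exact EReal.coe_ennreal_le_coe_ennreal_iff.2 (max_le ha hc)
  calc (ENNReal.ofReal (a + c) : EReal) = ((max a (-c) + c : ℝ) : EReal) := by
        rw [EReal.coe_ennreal_ofReal, ← max_add_add_right, neg_add_cancel]
    _ = ((max a (-c) : ℝ) : EReal) + c := EReal.coe_add _ _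
    _ ≤ V + c := add_le_add_left hmax _

section Splice

variable {E : Type*} [NormedAddCommGroup E] {T : Set ℝ} {c : ℝ}

lemma LocLp.piecewise_Iic {p : ℝ≥0∞} {f g : ℝ → E} (hf : LocLp T p f) (hg : LocLp T p g) :
    LocLp T p ((Iic c).piecewise f g) := fun a ha b hb =>
  ((hf a ha b hb).restrict _).piecewise measurableSet_Iic ((hg a ha b hb).restrict _)

lemma IntegrableOn.piecewise_Iic {s : Set ℝ} {f g : ℝ → E} (hf : IntegrableOn f s)
    (hg : IntegrableOn g s) : IntegrableOn ((Iic c).piecewise f g) s :=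
  Integrable.piecewise measurableSet_Iic hf.integrableOn hg.integrableOn

lemma intervalIntegrable_of_forall_integrableOn_Icc {F : ℝ → E}
    (hF : ∀ a ∈ T, ∀ b ∈ T, IntegrableOn F (Icc a b)) {a b : ℝ} (ha : a ∈ T) (hb : b ∈ T) :
    IntervalIntegrable F volume a b :=
  ⟨(hF a ha b hb).mono_set Ioc_subset_Icc_self, (hF b hb a ha).mono_set Ioc_subset_Icc_self⟩

variable [NormedSpace ℝ E] {a b : ℝ} {F G : ℝ → E}

lemma intervalIntegral_piecewise_Iic_of_le (ha : a ≤ c) (hb : b ≤ c) :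
    ∫ r in a..b, (Iic c).piecewise F G r = ∫ r in a..b, F r :=
  intervalIntegral.integral_congr fun _ hr => piecewise_eq_of_mem _ _ _ (hr.2.trans (max_le ha hb))

lemma intervalIntegral_piecewise_Iic_of_ge (ha : c ≤ a) (hb : c ≤ b) :
    ∫ r in a..b, (Iic c).piecewise F G r = ∫ r in a..b, G r :=
  intervalIntegral.integral_congr_ae <| ae_of_all _ fun _ hr =>
    piecewise_eq_of_notMem _ _ _ (not_le.2 ((le_min ha hb).trans_lt hr.1))

lemma piecewise_Iic_sub_eq_integral (hc : c ∈ T) {f g : ℝ → E}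
    (hF : ∀ a ∈ T, ∀ b ∈ T, IntegrableOn F (Icc a b))
    (hG : ∀ a ∈ T, ∀ b ∈ T, IntegrableOn G (Icc a b))
    (hf : ∀ s ∈ T, ∀ t ∈ T, f t - f s = ∫ r in s..t, F r)
    (hg : ∀ s ∈ T, ∀ t ∈ T, g t - g s = ∫ r in s..t, G r) (hfg : f c = g c) (s : ℝ) (hs : s ∈ T)
    (t : ℝ) (ht : t ∈ T) :
    (Iic c).piecewise f g t - (Iic c).piecewise f g s =
      ∫ r in s..t, (Iic c).piecewise F G r := by
  have hint : ∀ a ∈ T, ∀ b ∈ T, IntegrableOn ((Iic c).piecewise F G) (Icc a b) :=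
    fun a ha b hb => IntegrableOn.piecewise_Iic (hF a ha b hb) (hG a ha b hb)
  have hright : ∀ t, c ≤ t → (Iic c).piecewise f g t = g t := by
    intro t hct
    rcases hct.eq_or_lt with rfl | hct
    · exact (piecewise_eq_of_mem _ _ _ self_mem_Iic).trans hfg
    · exact piecewise_eq_of_notMem _ _ _ (not_le.2 hct)
  have hfrom_c : ∀ t ∈ T, (Iic c).piecewise f g t - f c = ∫ r in c..t, (Iic c).piecewise F G r := by
    intro t ht
    rcases le_total t c with htc | hct
    · rw [piecewise_eq_of_mem (s := Iic c) _ _ htc, intervalIntegral_piecewise_Iic_of_le le_rfl htc,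
        hf c hc t ht]
    · rw [hright t hct, hfg, intervalIntegral_piecewise_Iic_of_ge le_rfl hct, hg c hc t ht]
  rw [← intervalIntegral.integral_interval_sub_left
      (intervalIntegrable_of_forall_integrableOn_Icc hint hc ht)
      (intervalIntegrable_of_forall_integrableOn_Icc hint hc hs),
    ← hfrom_c t ht, ← hfrom_c s hs, sub_sub_sub_cancel_right]

end Splice

section Solutions

variable {T : Set ℝ} {A : ℝ → Matrix (Fin n) (Fin n) ℂ} {B : ℝ → Matrix (Fin n) (Fin m) ℂ}
  {C : ℝ → Matrix (Fin m) (Fin n) ℂ} {D : ℝ → Matrix (Fin m) (Fin m) ℂ}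
  {x x' : ℝ → Fin n → ℂ} {u y u' y' : ℝ → Fin m → ℂ}

lemma IsSolution.piecewise_Iic {c : ℝ} (hc : c ∈ T) (hs : IsSolution T A B C D x u y)
    (hs' : IsSolution T A B C D x' u' y') (hx : x c = x' c) :
    IsSolution T A B C D ((Iic c).piecewise x x') ((Iic c).piecewise u u')
      ((Iic c).piecewise y y') := by
  obtain ⟨hu, hy, hI, hODE, hout⟩ := hs
  obtain ⟨hu', hy', hI', hODE', hout'⟩ := hs'
  have hfield : (fun r => A r *ᵥ (Iic c).piecewise x x' r + B r *ᵥ (Iic c).piecewise u u' r) =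
      (Iic c).piecewise (fun r => A r *ᵥ x r + B r *ᵥ u r) (fun r => A r *ᵥ x' r + B r *ᵥ u' r) := by
    funext r
    by_cases hr : r ∈ Iic c <;> simp [hr]
  refine ⟨hu.piecewise_Iic hu', hy.piecewise_Iic hy', fun a ha b hb => ?_, fun s hs t ht => ?_, ?_⟩
  · rw [hfield]
    exact IntegrableOn.piecewise_Iic (hI a ha b hb) (hI' a ha b hb)
  · rw [hfield]
    exact piecewise_Iic_sub_eq_integral hc hI hI' hODE hODE' hx s hs t ht
  · filter_upwards [hout, hout'] with t ht ht' hT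
    by_cases hr : t ∈ Iic c <;> simp [hr, ht hT, ht' hT]

lemma ofReal_le_availableStorage {t₀ t₁ : ℝ} (ht₁ : t₁ ∈ T) (h : t₀ ≤ t₁)
    (hs : IsSolution T A B C D x u y) :
    ENNReal.ofReal (-∫ t in t₀..t₁, (star (y t) ⬝ᵥ u t).re) ≤ availableStorage T A B C D t₀ (x t₀) :=
  le_iSup_of_le t₁ <| le_iSup₂_of_le ht₁ h <| le_iSup₂_of_le x u <| le_iSup₂_of_le y hs <|
    le_iSup_of_le rfl le_rfl

lemma coe_availableStorage_le {t₀ : ℝ} {x₀ : Fin n → ℂ} {z : EReal} (hz : 0 ≤ z)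
    (h : ∀ t₁ ∈ T, t₀ ≤ t₁ → ∀ x u y, IsSolution T A B C D x u y → x t₀ = x₀ →
      (ENNReal.ofReal (-∫ t in t₀..t₁, (star (y t) ⬝ᵥ u t).re) : EReal) ≤ z) :
    (availableStorage T A B C D t₀ x₀ : EReal) ≤ z := by
  lift z to ℝ≥0∞ using hz
  simp only [EReal.coe_ennreal_le_coe_ennreal_iff] at h ⊢
  simpa only [availableStorage, iSup_le_iff] using h

lemma ofReal_add_le_availableStorage_of_piecewise {t₀ t₁ t₂ : ℝ} (ht₀ : t₀ ∈ T) (ht₁ : t₁ ∈ T)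
    (ht₂ : t₂ ∈ T) (h₀₁ : t₀ ≤ t₁) (h₁₂ : t₁ ≤ t₂) (hs : IsSolution T A B C D x u y)
    (hs' : IsSolution T A B C D x' u' y') (hx : x' t₁ = x t₁) :
    ENNReal.ofReal (-((∫ t in t₀..t₁, (star (y t) ⬝ᵥ u t).re) +
      ∫ t in t₁..t₂, (star (y' t) ⬝ᵥ u' t).re)) ≤ availableStorage T A B C D t₀ (x t₀) := by
  have hsupply : (fun t => (star ((Iic t₁).piecewise y y' t) ⬝ᵥ (Iic t₁).piecewise u u' t).re) =
      (Iic t₁).piecewise (fun t => (star (y t) ⬝ᵥ u t).re) (fun t => (star (y' t) ⬝ᵥ u' t).re) := by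
    funext t
    by_cases ht : t ∈ Iic t₁ <;> simp [ht]
  have hint : ∀ a ∈ T, ∀ b ∈ T, IntegrableOn ((Iic t₁).piecewise (fun t => (star (y t) ⬝ᵥ u t).re)
      (fun t => (star (y' t) ⬝ᵥ u' t).re)) (Icc a b) := fun a ha b hb =>
    IntegrableOn.piecewise_Iic (integrable_re_star_dotProduct (hs.1 a ha b hb) (hs.2.1 a ha b hb))
      (integrable_re_star_dotProduct (hs'.1 a ha b hb) (hs'.2.1 a ha b hb))
  have key := ofReal_le_availableStorage ht₂ (h₀₁.trans h₁₂) (hs.piecewise_Iic ht₁ hs' hx.symm)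
  rwa [piecewise_eq_of_mem (s := Iic t₁) _ _ h₀₁, hsupply,
    ← intervalIntegral.integral_add_adjacent_intervals
      (intervalIntegrable_of_forall_integrableOn_Icc hint ht₀ ht₁)
      (intervalIntegrable_of_forall_integrableOn_Icc hint ht₁ ht₂),
    intervalIntegral_piecewise_Iic_of_le h₀₁ le_rfl,
    intervalIntegral_piecewise_Iic_of_ge le_rfl h₁₂] at key

end Solutions

theorem availableStorage_dissipation_general
    (T : Set ℝ) (A : ℝ → Matrix (Fin n) (Fin n) ℂ) (B : ℝ → Matrix (Fin n) (Fin m) ℂ)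
    (C : ℝ → Matrix (Fin m) (Fin n) ℂ) (D : ℝ → Matrix (Fin m) (Fin m) ℂ)
    (t₀ t₁ : ℝ) (ht₀ : t₀ ∈ T) (ht₁ : t₁ ∈ T) (h₂ : t₀ ≤ t₁)
    (x : ℝ → Fin n → ℂ) (u y : ℝ → Fin m → ℂ)
    (hsol : IsSolution T A B C D x u y) :
    ((availableStorage T A B C D t₁ (x t₁) : EReal) ≤
      (availableStorage T A B C D t₀ (x t₀) : EReal) +
        ((∫ t in t₀..t₁, (star (y t) ⬝ᵥ u t).re : ℝ) : EReal)) ∧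
    (availableStorage T A B C D t₀ (x t₀) ≠ ⊤ →
      availableStorage T A B C D t₁ (x t₁) ≠ ⊤) := by
  set c := ∫ t in t₀..t₁, (star (y t) ⬝ᵥ u t).re
  have hc : ENNReal.ofReal (-c) ≤ availableStorage T A B C D t₀ (x t₀) :=
    ofReal_le_availableStorage ht₁ h₂ hsol
  have hdiss : (availableStorage T A B C D t₁ (x t₁) : EReal) ≤
      availableStorage T A B C D t₀ (x t₀) + c := by
    refine coe_availableStorage_le (by simpa using coe_ofReal_add_le_coe_add hc hc) ?_
    intro t₂ ht₂ h₁₂ x' u' y' hsol' hx'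
    have hsplice := ofReal_add_le_availableStorage_of_piecewise ht₀ ht₁ ht₂ h₂ h₁₂ hsol hsol' hx'
    convert coe_ofReal_add_le_coe_add hsplice hc using 4
    ring
  refine ⟨hdiss, fun hV₀ hV₁ => ?_⟩
  have hlt := hdiss.trans_lt (EReal.add_lt_top (by simpa using hV₀) (EReal.coe_ne_top c))
  simp [hV₁] at hlt

/-- **Monotonicity of the available storage along trajectories starting at rest.**
For `t₋₁ ≤ t₀ ≤ t₁` in `𝕋` and a solution `(x,u,y)` with `x(t₋₁) = 0`,
`V_a(t₁, x(t₁)) ≤ V_a(t₀, x(t₀)) + ∫_{t₀}^{t₁} Re(yᴴu)`; in particular finiteness of the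
available storage propagates forward. -/
theorem availableStorage_dissipation
    (T : Set ℝ) (hTopen : IsOpen T) (hTconn : T.OrdConnected)
    (A : ℝ → Matrix (Fin n) (Fin n) ℂ) (B : ℝ → Matrix (Fin n) (Fin m) ℂ)
    (C : ℝ → Matrix (Fin m) (Fin n) ℂ) (D : ℝ → Matrix (Fin m) (Fin m) ℂ)
    (hLTV : IsLTV T A B C D)
    (tm1 t₀ t₁ : ℝ) (htm1 : tm1 ∈ T) (ht₀ : t₀ ∈ T) (ht₁ : t₁ ∈ T)
    (h₁ : tm1 ≤ t₀) (h₂ : t₀ ≤ t₁)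
    (x : ℝ → Fin n → ℂ) (u y : ℝ → Fin m → ℂ)
    (hsol : IsSolution T A B C D x u y) (hx0 : x tm1 = 0) :
    ((availableStorage T A B C D t₁ (x t₁) : EReal) ≤
      (availableStorage T A B C D t₀ (x t₀) : EReal) +
        ((∫ t in t₀..t₁, (star (y t) ⬝ᵥ u t).re : ℝ) : EReal)) ∧
    (availableStorage T A B C D t₀ (x t₀) ≠ ⊤ →
      availableStorage T A B C D t₁ (x t₁) ≠ ⊤) :=
  availableStorage_dissipation_general T A B C D t₀ t₁ ht₀ ht₁ h₂ x u y hsol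
end
end
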